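/- arXiv:2406.06090 — 3 statements merged into one kernel-verified Lean document; each statement's English description precedes it below -/
import Mathlib

section
/- Complementary slackness for adjustment ratios in the PT model: if (π, Q, P) is PT-dual-feasible, (v, u) is PT-primal-feasible with goal price τ, and τ·(∑_{i∈I} Q i + ∑_{r∈R} P r) = ∑_{i∈I} v i · X i o − ∑_{r∈R} u r · Y r o, then (v i · X i o − τ) · Q i = 0 for every i ∈ I and (u r · Y r o − τ) · P r = 0 for every r ∈ R. -/
/-!
Pairing the primal slacks with `π` and substituting the dual equality constraints shows that the
`π`-weighted slack equals the primal objective minus the dual objective minus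
`∑ (v i X i o - τ) Q i + ∑ (u r Y r o - τ) P r`. When the two objectives agree, a nonnegative
number is thus the negative of a sum of nonnegative terms, so every term vanishes.
-/

open Finset

/-- A triple `(π, Q, P)` is PT-dual-feasible. -/
def PTDualFeasible {I R J : Type*} [Fintype I] [Fintype R] [Fintype J]
    (X : I → J → ℝ) (Y : R → J → ℝ) (o : J)
    (π : J → ℝ) (Q : I → ℝ) (P : R → ℝ) : Prop :=
  (∀ j, 0 ≤ π j) ∧ (∀ i, 0 ≤ Q i) ∧ (∀ r, 0 ≤ P r) ∧
  (∀ i, (∑ j, X i j * π j) + Q i * X i o = X i o) ∧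
  (∀ r, -(∑ j, Y r j * π j) + P r * Y r o = -(Y r o))

/-- A pair `(v, u)` is PT-primal-feasible with goal price `τ`. -/
def PTPrimalFeasible {I R J : Type*} [Fintype I] [Fintype R] [Fintype J]
    (X : I → J → ℝ) (Y : R → J → ℝ) (o : J) (τ : ℝ)
    (v : I → ℝ) (u : R → ℝ) : Prop :=
  (∀ j, 0 ≤ (∑ i, v i * X i j) - ∑ r, u r * Y r j) ∧
  (∀ i, τ ≤ X i o * v i) ∧ (∀ r, τ ≤ Y r o * u r)

theorem sum_mul_sum_comm {α I J : Type*} [CommSemiring α] [Fintype I] [Fintype J]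
    (w : J → α) (v : I → α) (A : I → J → α) :
    ∑ j, w j * ∑ i, v i * A i j = ∑ i, v i * ∑ j, A i j * w j := by
  simp_rw [mul_sum]
  rw [sum_comm]
  exact sum_congr rfl fun i _ => sum_congr rfl fun j _ => by ring

theorem forall_eq_zero_of_sum_add_sum_eq_zero {M ι κ : Type*} [AddCommMonoid M] [PartialOrder M]
    [IsOrderedAddMonoid M] [Fintype ι] [Fintype κ] {f : ι → M} {g : κ → M}
    (hf : ∀ i, 0 ≤ f i) (hg : ∀ k, 0 ≤ g k) (h : ∑ i, f i + ∑ k, g k = 0) :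
    (∀ i, f i = 0) ∧ ∀ k, g k = 0 := by
  obtain ⟨hf0, hg0⟩ :=
    (add_eq_zero_iff_of_nonneg (sum_nonneg fun i _ => hf i) (sum_nonneg fun k _ => hg k)).1 h
  exact ⟨fun i => (sum_eq_zero_iff_of_nonneg fun i _ => hf i).1 hf0 i (mem_univ i),
    fun k => (sum_eq_zero_iff_of_nonneg fun k _ => hg k).1 hg0 k (mem_univ k)⟩

theorem PTDualFeasible.sum_mul_slack_eq {I R J : Type*} [Fintype I] [Fintype R] [Fintype J]
    {X : I → J → ℝ} {Y : R → J → ℝ} {o : J} {π : J → ℝ} {Q : I → ℝ} {P : R → ℝ}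
    (hdual : PTDualFeasible X Y o π Q P) (τ : ℝ) (v : I → ℝ) (u : R → ℝ) :
    ∑ j, π j * ((∑ i, v i * X i j) - ∑ r, u r * Y r j)
      = ((∑ i, v i * X i o) - ∑ r, u r * Y r o) - τ * ((∑ i, Q i) + ∑ r, P r)
        - ((∑ i, (v i * X i o - τ) * Q i) + ∑ r, (u r * Y r o - τ) * P r) := by
  obtain ⟨-, -, -, hX, hY⟩ := hdual
  have hinputs : ∑ i, v i * ∑ j, X i j * π j
      = ∑ i, v i * X i o - ∑ i, (v i * X i o - τ) * Q i - τ * ∑ i, Q i := by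
    rw [mul_sum, ← sum_sub_distrib, ← sum_sub_distrib]
    exact sum_congr rfl fun i _ => by linear_combination v i * hX i
  have houtputs : ∑ r, u r * ∑ j, Y r j * π j
      = ∑ r, u r * Y r o + ∑ r, (u r * Y r o - τ) * P r + τ * ∑ r, P r := by
    rw [mul_sum, ← sum_add_distrib, ← sum_add_distrib]
    exact sum_congr rfl fun r _ => by linear_combination -(u r * hY r)
  simp only [mul_sub, sum_sub_distrib]
  rw [sum_mul_sum_comm, sum_mul_sum_comm, hinputs, houtputs]
  ring

theorem pt_complementary_slackness_ratios_general
    {I R J : Type*} [Fintype I] [Fintype R] [Fintype J]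
    (X : I → J → ℝ) (Y : R → J → ℝ)
    (o : J) (τ : ℝ)
    (π : J → ℝ) (Q : I → ℝ) (P : R → ℝ)
    (hdual : PTDualFeasible X Y o π Q P)
    (v : I → ℝ) (u : R → ℝ)
    (hprimal : PTPrimalFeasible X Y o τ v u)
    (heq : τ * ((∑ i, Q i) + ∑ r, P r)
      = (∑ i, v i * X i o) - ∑ r, u r * Y r o) :
    (∀ i, (v i * X i o - τ) * Q i = 0) ∧
    (∀ r, (u r * Y r o - τ) * P r = 0) := by
  have hgap := hdual.sum_mul_slack_eq τ v u
  obtain ⟨hπ, hQ, hP, -, -⟩ := hdual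
  obtain ⟨hslack, hXv, hYu⟩ := hprimal
  have hinputTerm : ∀ i, 0 ≤ (v i * X i o - τ) * Q i :=
    fun i => mul_nonneg (sub_nonneg.2 (mul_comm (X i o) (v i) ▸ hXv i)) (hQ i)
  have houtputTerm : ∀ r, 0 ≤ (u r * Y r o - τ) * P r :=
    fun r => mul_nonneg (sub_nonneg.2 (mul_comm (Y r o) (u r) ▸ hYu r)) (hP r)
  have hweighted : 0 ≤ ∑ j, π j * ((∑ i, v i * X i j) - ∑ r, u r * Y r j) :=
    sum_nonneg fun j _ => mul_nonneg (hπ j) (hslack j)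
  refine forall_eq_zero_of_sum_add_sum_eq_zero hinputTerm houtputTerm (le_antisymm ?_ ?_)
  · linarith
  · exact add_nonneg (sum_nonneg fun i _ => hinputTerm i) (sum_nonneg fun r _ => houtputTerm r)

/-- Complementary slackness for adjustment ratios in the PT model. -/
theorem pt_complementary_slackness_ratios
    {I R J : Type*} [Fintype I] [Fintype R] [Fintype J]
    [Nonempty I] [Nonempty R] [Nonempty J]
    (X : I → J → ℝ) (Y : R → J → ℝ)
    (hX : ∀ i j, 0 < X i j) (hY : ∀ r j, 0 < Y r j)
    (o : J) (τ : ℝ) (hτ : 0 < τ)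
    (π : J → ℝ) (Q : I → ℝ) (P : R → ℝ)
    (hdual : PTDualFeasible X Y o π Q P)
    (v : I → ℝ) (u : R → ℝ)
    (hprimal : PTPrimalFeasible X Y o τ v u)
    (heq : τ * ((∑ i, Q i) + ∑ r, P r)
      = (∑ i, v i * X i o) - ∑ r, u r * Y r o) :
    (∀ i, (v i * X i o - τ) * Q i = 0) ∧
    (∀ r, (u r * Y r o - τ) * P r = 0) :=
  pt_complementary_slackness_ratios_general X Y o τ π Q P hdual v u hprimal heq
end

section
/- Complementary slackness for the TSc model: if (π, Q, P) is TSc-dual-feasible with scalar κ, (v, u, w) is TSc-primal-feasible with goal price τ, and τ·(∑_{i∈I} Q i + ∑_{r∈R} P r) = ∑_{i∈I} v i · X i o − ∑_{r∈R} u r · Y r o + κ·w, then (∑_{i∈I} v i · X i j − ∑_{r∈R} u r · Y r j + w) · π j = 0 for every j ∈ J, (v i · X i o − τ) · Q i = 0 for every i ∈ I, and (u r · Y r o − τ) · P r = 0 for every r ∈ R. -/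
open Finset

/-- A triple `(π, Q, P)` is TSc-dual-feasible with scalar `κ`. -/
def TScDualFeasible {I R J : Type*} [Fintype I] [Fintype R] [Fintype J]
    (X : I → J → ℝ) (Y : R → J → ℝ) (o : J) (κ : ℝ)
    (π : J → ℝ) (Q : I → ℝ) (P : R → ℝ) : Prop :=
  (∀ j, 0 ≤ π j) ∧ (∀ i, 0 ≤ Q i) ∧ (∀ r, 0 ≤ P r) ∧
  (∀ i, (∑ j, X i j * π j) + Q i * X i o = X i o) ∧
  (∀ r, -(∑ j, Y r j * π j) + P r * Y r o = -(Y r o)) ∧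
  (∑ j, π j = κ)

/-- A triple `(v, u, w)` is TSc-primal-feasible with goal price `τ`. -/
def TScPrimalFeasible {I R J : Type*} [Fintype I] [Fintype R] [Fintype J]
    (X : I → J → ℝ) (Y : R → J → ℝ) (o : J) (τ : ℝ)
    (v : I → ℝ) (u : R → ℝ) (w : ℝ) : Prop :=
  (∀ j, 0 ≤ (∑ i, v i * X i j) - (∑ r, u r * Y r j) + w) ∧
  (∀ i, τ ≤ X i o * v i) ∧ (∀ r, τ ≤ Y r o * u r)

theorem Fintype.eq_zero_of_sum_add_sum_add_sum_eq_zero {α β γ M : Type*}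
    [Fintype α] [Fintype β] [Fintype γ]
    [AddCommMonoid M] [PartialOrder M] [IsOrderedAddMonoid M]
    {f : α → M} {g : β → M} {h : γ → M} (hf : 0 ≤ f) (hg : 0 ≤ g) (hh : 0 ≤ h)
    (hsum : ∑ a, f a + ∑ b, g b + ∑ c, h c = 0) : f = 0 ∧ g = 0 ∧ h = 0 := by
  have hf' : 0 ≤ ∑ a, f a := Fintype.sum_nonneg hf
  have hg' : 0 ≤ ∑ b, g b := Fintype.sum_nonneg hg
  have hh' : 0 ≤ ∑ c, h c := Fintype.sum_nonneg hh
  obtain ⟨hfg, hh0⟩ := (add_eq_zero_iff_of_nonneg (add_nonneg hf' hg') hh').1 hsum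
  obtain ⟨hf0, hg0⟩ := (add_eq_zero_iff_of_nonneg hf' hg').1 hfg
  exact ⟨(Fintype.sum_eq_zero_iff_of_nonneg hf).1 hf0,
    (Fintype.sum_eq_zero_iff_of_nonneg hg).1 hg0, (Fintype.sum_eq_zero_iff_of_nonneg hh).1 hh0⟩

theorem sum_slack_mul_eq {I R J α : Type*} [Fintype I] [Fintype R] [Fintype J] [CommRing α]
    (X : I → J → α) (Y : R → J → α) (v : I → α) (u : R → α) (w : α) (π : J → α) :
    ∑ j, ((∑ i, v i * X i j) - (∑ r, u r * Y r j) + w) * π j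
      = (∑ i, v i * ∑ j, X i j * π j) - (∑ r, u r * ∑ j, Y r j * π j) + w * ∑ j, π j := by
  simp only [sub_mul, add_mul, sum_sub_distrib, sum_add_distrib, sum_mul, mul_sum, mul_assoc]
  rw [sum_comm (f := fun j i => v i * (X i j * π j)), sum_comm (f := fun j r => u r * (Y r j * π j))]

/-- The duality gap of the TSc pair splits into the complementary-slackness products. -/
theorem TScDualFeasible.sum_slack_products_eq {I R J : Type*} [Fintype I] [Fintype R] [Fintype J]
    {X : I → J → ℝ} {Y : R → J → ℝ} {o : J} {κ : ℝ} {π : J → ℝ} {Q : I → ℝ} {P : R → ℝ}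
    (hdual : TScDualFeasible X Y o κ π Q P) (τ : ℝ) (v : I → ℝ) (u : R → ℝ) (w : ℝ) :
    ∑ j, ((∑ i, v i * X i j) - (∑ r, u r * Y r j) + w) * π j
        + ∑ i, (v i * X i o - τ) * Q i + ∑ r, (u r * Y r o - τ) * P r
      = (∑ i, v i * X i o) - (∑ r, u r * Y r o) + κ * w - τ * ((∑ i, Q i) + ∑ r, P r) := by
  obtain ⟨-, -, -, hXπ, hYπ, hκ⟩ := hdual
  have hX : ∀ i, ∑ j, X i j * π j = X i o - X i o * Q i := fun i => by linarith [hXπ i]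
  have hY : ∀ r, ∑ j, Y r j * π j = Y r o + Y r o * P r := fun r => by linarith [hYπ r]
  simp only [sum_slack_mul_eq, hX, hY, hκ, mul_sub, mul_add, sub_mul, sum_sub_distrib,
    sum_add_distrib, mul_sum, mul_assoc]
  ring

theorem tsc_complementary_slackness_general
    {I R J : Type*} [Fintype I] [Fintype R] [Fintype J]
    (X : I → J → ℝ) (Y : R → J → ℝ)
    (o : J) (τ : ℝ) (κ : ℝ)
    (π : J → ℝ) (Q : I → ℝ) (P : R → ℝ)
    (hdual : TScDualFeasible X Y o κ π Q P)
    (v : I → ℝ) (u : R → ℝ) (w : ℝ)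
    (hprimal : TScPrimalFeasible X Y o τ v u w)
    (heq : τ * ((∑ i, Q i) + ∑ r, P r)
      = (∑ i, v i * X i o) - (∑ r, u r * Y r o) + κ * w) :
    (∀ j, ((∑ i, v i * X i j) - (∑ r, u r * Y r j) + w) * π j = 0) ∧
    (∀ i, (v i * X i o - τ) * Q i = 0) ∧
    (∀ r, (u r * Y r o - τ) * P r = 0) := by
  obtain ⟨hslack, hv, hu⟩ := hprimal
  have hgap := hdual.sum_slack_products_eq τ v u w
  rw [← heq, sub_self] at hgap
  obtain ⟨hj, hi, hr⟩ := Fintype.eq_zero_of_sum_add_sum_add_sum_eq_zero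
    (fun j => mul_nonneg (hslack j) (hdual.1 j))
    (fun i => mul_nonneg (sub_nonneg.2 ((hv i).trans_eq (mul_comm _ _))) (hdual.2.1 i))
    (fun r => mul_nonneg (sub_nonneg.2 ((hu r).trans_eq (mul_comm _ _))) (hdual.2.2.1 r)) hgap
  exact ⟨congrFun hj, congrFun hi, congrFun hr⟩

/-- Complementary slackness for the TSc model. -/
theorem tsc_complementary_slackness
    {I R J : Type*} [Fintype I] [Fintype R] [Fintype J]
    [Nonempty I] [Nonempty R] [Nonempty J]
    (X : I → J → ℝ) (Y : R → J → ℝ)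
    (hX : ∀ i j, 0 < X i j) (hY : ∀ r j, 0 < Y r j)
    (o : J) (τ : ℝ) (hτ : 0 < τ) (κ : ℝ)
    (π : J → ℝ) (Q : I → ℝ) (P : R → ℝ)
    (hdual : TScDualFeasible X Y o κ π Q P)
    (v : I → ℝ) (u : R → ℝ) (w : ℝ)
    (hprimal : TScPrimalFeasible X Y o τ v u w)
    (heq : τ * ((∑ i, Q i) + ∑ r, P r)
      = (∑ i, v i * X i o) - (∑ r, u r * Y r o) + κ * w) :
    (∀ j, ((∑ i, v i * X i j) - (∑ r, u r * Y r j) + w) * π j = 0) ∧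
    (∀ i, (v i * X i o - τ) * Q i = 0) ∧
    (∀ r, (u r * Y r o - τ) * P r = 0) :=
  tsc_complementary_slackness_general X Y o τ κ π Q P hdual v u w hprimal heq
end

section
/- (Theorem 3) Bounds on the TSc efficiency: let (v, u, w) be TSc-primal-feasible with goal price τ, suppose there exists a TSc-dual-feasible triple (π, Q, P) with scalar κ, let ω := κ·w and γ ∈ ℝ, and define the affected virtual input α := ∑_{i∈I} v i · X i o + (1 − γ)·ω and the affected virtual output β := ∑_{r∈R} u r · Y r o − γ·ω. If α = 1 and β > 0, then 0 < β ≤ 1; consequently the TSc efficiency E := β/α satisfies 0 < E ≤ 1 and the TSc inefficiency F := (α − β)/α satisfies F = 1 − E and 0 ≤ F < 1. -/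
open Finset

/-!
Weak duality: weighting the primal constraints `∑ᵢ vᵢ Xᵢⱼ - ∑ᵣ uᵣ Yᵣⱼ + w ≥ 0` by a dual
feasible `π` and using the dual equations to eliminate `∑ⱼ Xᵢⱼ πⱼ` and `∑ⱼ Yᵣⱼ πⱼ` shows that
`α - β = ∑ᵢ vᵢ Xᵢₒ - ∑ᵣ uᵣ Yᵣₒ + κ w` is a sum of nonnegative terms. Hence `β ≤ α = 1`.
-/

theorem efficiency_bounds_of_pos_of_le {α β : ℝ} (hβ : 0 < β) (hβα : β ≤ α) :
    0 < β / α ∧ β / α ≤ 1 ∧ (α - β) / α = 1 - β / α ∧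
      0 ≤ (α - β) / α ∧ (α - β) / α < 1 := by
  have hα : 0 < α := hβ.trans_le hβα
  have hsplit : (α - β) / α = 1 - β / α := by rw [sub_div, div_self hα.ne']
  have hle : β / α ≤ 1 := (div_le_one hα).2 hβα
  have hpos : 0 < β / α := div_pos hβ hα
  exact ⟨hpos, hle, hsplit, by linarith, by linarith⟩

theorem sum_mul_sum_swap {ι κ S : Type*} [Fintype ι] [Fintype κ] [CommSemiring S]
    (a : ι → S) (b : κ → S) (M : κ → ι → S) :
    ∑ j, a j * ∑ k, b k * M k j = ∑ k, b k * ∑ j, M k j * a j := by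
  simp only [mul_sum]
  rw [sum_comm]
  exact sum_congr rfl fun _ _ => sum_congr rfl fun _ _ => by ring

section

variable {I R J : Type*} [Fintype I] [Fintype R] [Fintype J]
  {X : I → J → ℝ} {Y : R → J → ℝ} {o : J}

theorem TScDualFeasible.sum_mul_slack {κ : ℝ} {π : J → ℝ} {Q : I → ℝ} {P : R → ℝ}
    (hd : TScDualFeasible X Y o κ π Q P) (v : I → ℝ) (u : R → ℝ) (w : ℝ) :
    ∑ j, π j * ((∑ i, v i * X i j) - (∑ r, u r * Y r j) + w) =
      (∑ i, v i * X i o) - (∑ r, u r * Y r o) + κ * w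
        - ∑ i, Q i * (X i o * v i) - ∑ r, P r * (Y r o * u r) := by
  obtain ⟨-, -, -, hX, hY, hκ⟩ := hd
  have hXπ : ∀ i, ∑ j, X i j * π j = X i o - Q i * X i o := fun i => by linarith [hX i]
  have hYπ : ∀ r, ∑ j, Y r j * π j = Y r o + P r * Y r o := fun r => by linarith [hY r]
  simp only [mul_add, mul_sub, sum_add_distrib, sum_sub_distrib, ← sum_mul, hκ,
    sum_mul_sum_swap, hXπ, hYπ]
  have hQ : ∑ i, v i * (Q i * X i o) = ∑ i, Q i * (X i o * v i) :=
    sum_congr rfl fun _ _ => by ring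
  have hP : ∑ r, u r * (P r * Y r o) = ∑ r, P r * (Y r o * u r) :=
    sum_congr rfl fun _ _ => by ring
  rw [hQ, hP]
  ring

theorem tsc_weak_duality {τ κ : ℝ} (hτ : 0 ≤ τ) {v : I → ℝ} {u : R → ℝ} {w : ℝ}
    (hprimal : TScPrimalFeasible X Y o τ v u w) {π : J → ℝ} {Q : I → ℝ} {P : R → ℝ}
    (hdual : TScDualFeasible X Y o κ π Q P) :
    0 ≤ (∑ i, v i * X i o) - (∑ r, u r * Y r o) + κ * w := by
  have hweighted := hdual.sum_mul_slack v u w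
  obtain ⟨hslack, hv, hu⟩ := hprimal
  obtain ⟨hπ, hQ, hP, -⟩ := hdual
  have h₁ : 0 ≤ ∑ j, π j * ((∑ i, v i * X i j) - (∑ r, u r * Y r j) + w) :=
    sum_nonneg fun j _ => mul_nonneg (hπ j) (hslack j)
  have h₂ : 0 ≤ ∑ i, Q i * (X i o * v i) :=
    sum_nonneg fun i _ => mul_nonneg (hQ i) (hτ.trans (hv i))
  have h₃ : 0 ≤ ∑ r, P r * (Y r o * u r) :=
    sum_nonneg fun r _ => mul_nonneg (hP r) (hτ.trans (hu r))
  linarith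

end

theorem tsc_efficiency_bounds_general
    {I R J : Type*} [Fintype I] [Fintype R] [Fintype J]
    (X : I → J → ℝ) (Y : R → J → ℝ)
    (o : J) (τ : ℝ) (hτ : 0 < τ) (κ : ℝ)
    (v : I → ℝ) (u : R → ℝ) (w : ℝ)
    (hprimal : TScPrimalFeasible X Y o τ v u w)
    (hdual : ∃ (π : J → ℝ) (Q : I → ℝ) (P : R → ℝ),
      TScDualFeasible X Y o κ π Q P)
    (ω γ α β : ℝ)
    (hω : ω = κ * w)
    (hα : α = (∑ i, v i * X i o) + (1 - γ) * ω)
    (hβ : β = (∑ r, u r * Y r o) - γ * ω)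
    (hα1 : α = 1) (hβpos : 0 < β) :
    (0 < β) ∧ (β ≤ 1) ∧
    (0 < β / α) ∧ (β / α ≤ 1) ∧
    ((α - β) / α = 1 - β / α) ∧
    (0 ≤ (α - β) / α) ∧ ((α - β) / α < 1) := by
  obtain ⟨π, Q, P, hd⟩ := hdual
  have hgap := tsc_weak_duality hτ.le hprimal hd
  have hβα : β ≤ α := by rw [hα, hβ, hω]; linarith
  exact ⟨hβpos, hα1 ▸ hβα, efficiency_bounds_of_pos_of_le hβpos hβα⟩

/-- (Theorem 3) Bounds on the TSc efficiency. -/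
theorem tsc_efficiency_bounds
    {I R J : Type*} [Fintype I] [Fintype R] [Fintype J]
    [Nonempty I] [Nonempty R] [Nonempty J]
    (X : I → J → ℝ) (Y : R → J → ℝ)
    (hX : ∀ i j, 0 < X i j) (hY : ∀ r j, 0 < Y r j)
    (o : J) (τ : ℝ) (hτ : 0 < τ) (κ : ℝ)
    (v : I → ℝ) (u : R → ℝ) (w : ℝ)
    (hprimal : TScPrimalFeasible X Y o τ v u w)
    (hdual : ∃ (π : J → ℝ) (Q : I → ℝ) (P : R → ℝ),
      TScDualFeasible X Y o κ π Q P)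
    (ω γ α β : ℝ)
    (hω : ω = κ * w)
    (hα : α = (∑ i, v i * X i o) + (1 - γ) * ω)
    (hβ : β = (∑ r, u r * Y r o) - γ * ω)
    (hα1 : α = 1) (hβpos : 0 < β) :
    (0 < β) ∧ (β ≤ 1) ∧
    (0 < β / α) ∧ (β / α ≤ 1) ∧
    ((α - β) / α = 1 - β / α) ∧
    (0 ≤ (α - β) / α) ∧ ((α - β) / α < 1) :=
  tsc_efficiency_bounds_general X Y o τ hτ κ v u w hprimal hdual ω γ α β hω hα hβ hα1 hβpos
end
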